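/- arXiv:0902.0215 — 4 statements merged into one kernel-verified Lean document; each statement's English description precedes it below -/
import Mathlib

section
/- Let Q, K ⊂ ℝ^d be compact sets, let t : ℝ^d → ℝ^d be a polynomial map of degree k (i.e. t = (t₁,…,t_d) with each t_j a polynomial of total degree at most k) with t(Q) = K, and let B ⊂ Q be a finite set and C > 0 a constant such that ‖q‖_Q ≤ C ‖q‖_B for every polynomial q of total degree at most kn in d variables. Then for every polynomial p of total degree at most n in d variables, ‖p‖_K ≤ C ‖p‖_{t(B)}. -/
/-!
The pullback `p ∘ t = bind₁ T p` has total degree at most `k n`, and its values on `Q` and on `B`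
are exactly the values of `p` on `t(Q) = K` and on `t(B)`, so the inequality for `p ∘ t` on `Q`
is the claimed one for `p` on `K`.
-/

open MvPolynomial Set

namespace MvPolynomial

variable {σ τ R : Type*} [CommSemiring R]

theorem eval_bind₁ (f : σ → MvPolynomial τ R) (z : τ → R) (p : MvPolynomial σ R) :
    eval z (bind₁ f p) = eval (fun i => eval z (f i)) p :=
  eval₂Hom_bind₁ (RingHom.id R) z f p

theorem totalDegree_bind₁_monomial_le {f : σ → MvPolynomial τ R} {k : ℕ}
    (hf : ∀ i, (f i).totalDegree ≤ k) (m : σ →₀ ℕ) (r : R) :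
    (bind₁ f (monomial m r)).totalDegree ≤ k * m.degree := by
  rw [bind₁_monomial]
  refine (totalDegree_mul _ _).trans ?_
  rw [totalDegree_C, zero_add]
  calc (∏ i ∈ m.support, f i ^ m i).totalDegree
      ≤ ∑ i ∈ m.support, (f i ^ m i).totalDegree := totalDegree_finsetProd _ _
    _ ≤ ∑ i ∈ m.support, m i * k := Finset.sum_le_sum fun i _ =>
        (totalDegree_pow _ _).trans (Nat.mul_le_mul_left _ (hf i))
    _ = k * m.degree := by rw [← Finset.sum_mul, mul_comm, Finsupp.degree_apply]

theorem totalDegree_bind₁_le {f : σ → MvPolynomial τ R} {k : ℕ}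
    (hf : ∀ i, (f i).totalDegree ≤ k) (p : MvPolynomial σ R) :
    (bind₁ f p).totalDegree ≤ k * p.totalDegree := by
  conv_lhs => rw [p.as_sum, map_sum]
  refine totalDegree_finsetSum_le fun m hm => ?_
  refine (totalDegree_bind₁_monomial_le hf m _).trans (Nat.mul_le_mul_left k ?_)
  exact le_totalDegree hm

end MvPolynomial

theorem stmt4_general (d k n : ℕ) (Q K : Set (Fin d → ℝ))
    (T : Fin d → MvPolynomial (Fin d) ℝ) (hT : ∀ i, (T i).totalDegree ≤ k)
    (hsurj : (fun y i => MvPolynomial.eval y (T i)) '' Q = K)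
    (B : Finset (Fin d → ℝ))
    (C : ℝ)
    (hWAM : ∀ q : MvPolynomial (Fin d) ℝ, q.totalDegree ≤ k * n →
      ∀ y ∈ Q, |MvPolynomial.eval y q| ≤
        C * sSup ((fun b => |MvPolynomial.eval b q|) '' (B : Set (Fin d → ℝ)))) :
    ∀ p : MvPolynomial (Fin d) ℝ, p.totalDegree ≤ n →
      ∀ x ∈ K, |MvPolynomial.eval x p| ≤
        C * sSup ((fun a => |MvPolynomial.eval a p|) ''
          ((fun y i => MvPolynomial.eval y (T i)) '' (B : Set (Fin d → ℝ)))) := by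
  intro p hp x hx
  obtain ⟨y, hyQ, rfl⟩ := hsurj ▸ hx
  have hdeg : (bind₁ T p).totalDegree ≤ k * n :=
    (totalDegree_bind₁_le hT p).trans (Nat.mul_le_mul_left k hp)
  rw [image_image]
  simpa only [eval_bind₁] using hWAM (bind₁ T p) hdeg y hyQ

/-- Let `Q, K ⊂ ℝ^d` be compact, `t : ℝ^d → ℝ^d` a polynomial map of degree
`k` (components of total degree at most `k`) with `t(Q) = K`, and `B ⊂ Q` a finite set with
constant `C > 0` such that `‖q‖_Q ≤ C ‖q‖_B` for every polynomial `q` of total degree at most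
`k·n`. Then for every polynomial `p` of total degree at most `n`, `‖p‖_K ≤ C ‖p‖_{t(B)}`. -/
theorem stmt4 (d k n : ℕ) (Q K : Set (Fin d → ℝ)) (hQ : IsCompact Q) (hK : IsCompact K)
    (T : Fin d → MvPolynomial (Fin d) ℝ) (hT : ∀ i, (T i).totalDegree ≤ k)
    (hsurj : (fun y i => MvPolynomial.eval y (T i)) '' Q = K)
    (B : Finset (Fin d → ℝ)) (hBQ : (B : Set (Fin d → ℝ)) ⊆ Q)
    (C : ℝ) (hC : 0 < C)
    (hWAM : ∀ q : MvPolynomial (Fin d) ℝ, q.totalDegree ≤ k * n →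
      ∀ y ∈ Q, |MvPolynomial.eval y q| ≤
        C * sSup ((fun b => |MvPolynomial.eval b q|) '' (B : Set (Fin d → ℝ)))) :
    ∀ p : MvPolynomial (Fin d) ℝ, p.totalDegree ≤ n →
      ∀ x ∈ K, |MvPolynomial.eval x p| ≤
        C * sSup ((fun a => |MvPolynomial.eval a p|) ''
          ((fun y i => MvPolynomial.eval y (T i)) '' (B : Set (Fin d → ℝ)))) :=
  stmt4_general d k n Q K T hT hsurj B C hWAM
end

section
/- Let K ⊂ ℂ^d, let A ⊂ K be a finite set and C > 0 a constant such that ‖p‖_K ≤ C ‖p‖_A for every polynomial p of total degree at most n in d variables. Let N = C(n+d, d) and let Z ⊂ A with card(Z) = N be such that |vdm(Z)| ≥ |vdm(Z')| for every subset Z' ⊂ A with card(Z') = N, and vdm(Z) ≠ 0 (i.e. Z is a set of Fekete points of degree n for A). Then every fundamental Lagrange polynomial ℓ_a, a ∈ Z, satisfies ‖ℓ_a‖_A ≤ 1 and ‖ℓ_a‖_K ≤ C, and the Lebesgue constant satisfies sup_{z∈K} Σ_{a∈Z} |ℓ_a(z)| ≤ N·C. -/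
/-! Replacing one Fekete point by another point of `A` cannot increase `|vdm|`, so `‖ℓ_a‖_A ≤ 1`.
Expanding the determinant along the replaced row shows that `ℓ_a` is a combination of the
monomials `x^(α j)`, hence of degree `≤ n`, and the mesh inequality gives `‖ℓ_a‖_K ≤ C`; summing
over the `N` points bounds the Lebesgue constant by `N·C`. -/

open MvPolynomial

/-- The Vandermonde determinant of the points `z 0, …, z (N-1)` in `ℂ^d` with respect to
the monomials `x^(α j)`, `j = 0, …, N-1`. -/
noncomputable def vdm {d N : ℕ} (α : Fin N → (Fin d →₀ ℕ)) (z : Fin N → (Fin d → ℂ)) : ℂ :=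
  Matrix.det (Matrix.of fun i j => MvPolynomial.eval (z i) (MvPolynomial.monomial (α j) (1 : ℂ)))

open Matrix

theorem Matrix.det_updateRow_eq_sum_adjugate {n R : Type*} [Fintype n] [DecidableEq n]
    [CommRing R] (M : Matrix n n R) (i : n) (r : n → R) :
    (M.updateRow i r).det = ∑ j, Mᵀ.adjugate i j * r j := by
  rw [← det_transpose, ← updateCol_transpose, ← cramer_apply, cramer_eq_adjugate_mulVec]
  rfl

section Vandermonde

variable {d N : ℕ} (α : Fin N → (Fin d →₀ ℕ))

noncomputable def vdmMatrix (z : Fin N → (Fin d → ℂ)) : Matrix (Fin N) (Fin N) ℂ :=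
  Matrix.of fun i j => eval (z i) (monomial (α j) (1 : ℂ))

theorem vdm_eq_det_vdmMatrix (z : Fin N → (Fin d → ℂ)) : vdm α z = (vdmMatrix α z).det :=
  rfl

theorem vdmMatrix_update (z : Fin N → (Fin d → ℂ)) (i₀ : Fin N) (x : Fin d → ℂ) :
    vdmMatrix α (Function.update z i₀ x) =
      (vdmMatrix α z).updateRow i₀ fun j => eval x (monomial (α j) 1) := by
  ext i j
  rcases eq_or_ne i i₀ with rfl | h
  · simp [vdmMatrix]
  · simp [vdmMatrix, h]

theorem vdm_eq_zero_of_not_injective {z : Fin N → (Fin d → ℂ)} (hz : ¬Function.Injective z) :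
    vdm α z = 0 := by
  obtain ⟨i, j, hij, hne⟩ := Function.not_injective_iff.mp hz
  exact det_zero_of_row_eq hne (funext fun k => by simp [hij])

/-- The numerator `x ↦ vdm (Z \ {z i₀} ∪ {x})` of `ℓ_{i₀}`, by cofactor expansion along row `i₀`. -/
noncomputable def lagrangeNumerator (z : Fin N → (Fin d → ℂ)) (i₀ : Fin N) :
    MvPolynomial (Fin d) ℂ :=
  ∑ j, monomial (α j) ((vdmMatrix α z)ᵀ.adjugate i₀ j)

theorem eval_lagrangeNumerator (z : Fin N → (Fin d → ℂ)) (i₀ : Fin N) (x : Fin d → ℂ) :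
    eval x (lagrangeNumerator α z i₀) = vdm α (Function.update z i₀ x) := by
  rw [vdm_eq_det_vdmMatrix, vdmMatrix_update, det_updateRow_eq_sum_adjugate, lagrangeNumerator,
    map_sum]
  simp [eval_monomial]

theorem totalDegree_lagrangeNumerator_le {n : ℕ} (hα : ∀ j, ((α j).sum fun _ e => e) ≤ n)
    (z : Fin N → (Fin d → ℂ)) (i₀ : Fin N) :
    (lagrangeNumerator α z i₀).totalDegree ≤ n :=
  (totalDegree_finsetSum _ _).trans <|
    Finset.sup_le fun j _ => (totalDegree_monomial_le _ _).trans (hα j)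

theorem norm_vdm_update_le_of_isFekete {A : Finset (Fin d → ℂ)} {z : Fin N → (Fin d → ℂ)}
    (hmax : ∀ w : Fin N → (Fin d → ℂ), Function.Injective w → (∀ i, w i ∈ A) →
      ‖vdm α w‖ ≤ ‖vdm α z‖)
    (hzA : ∀ i, z i ∈ A) (i₀ : Fin N) {x : Fin d → ℂ} (hx : x ∈ A) :
    ‖vdm α (Function.update z i₀ x)‖ ≤ ‖vdm α z‖ := by
  by_cases hinj : Function.Injective (Function.update z i₀ x)
  · refine hmax _ hinj fun i => ?_
    rcases eq_or_ne i i₀ with rfl | h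
    · simpa using hx
    · simpa [h] using hzA i
  · rw [vdm_eq_zero_of_not_injective α hinj, norm_zero]
    exact norm_nonneg _

end Vandermonde

theorem stmt10_general (d n N : ℕ)
    (α : Fin N → (Fin d →₀ ℕ))
    (hαdeg : ∀ j, ((α j).sum fun _ e => e) ≤ n)
    (K : Set (Fin d → ℂ)) (A : Finset (Fin d → ℂ))
    (C : ℝ) (hC : 0 < C)
    (hWAM : ∀ p : MvPolynomial (Fin d) ℂ, p.totalDegree ≤ n →
      ∀ x ∈ K, ‖MvPolynomial.eval x p‖ ≤
        C * sSup ((fun a => ‖MvPolynomial.eval a p‖) '' (A : Set (Fin d → ℂ))))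
    (z : Fin N → (Fin d → ℂ)) (hzA : ∀ i, z i ∈ A)
    (hmax : ∀ w : Fin N → (Fin d → ℂ), Function.Injective w → (∀ i, w i ∈ A) →
      ‖vdm α w‖ ≤ ‖vdm α z‖)
    (hvdm : vdm α z ≠ 0) :
    (∀ i₀ : Fin N, ∀ x ∈ (A : Set (Fin d → ℂ)),
      ‖vdm α (Function.update z i₀ x) / vdm α z‖ ≤ 1) ∧
    (∀ i₀ : Fin N, ∀ x ∈ K,
      ‖vdm α (Function.update z i₀ x) / vdm α z‖ ≤ C) ∧
    (∀ x ∈ K,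
      ∑ i₀ : Fin N, ‖vdm α (Function.update z i₀ x) / vdm α z‖ ≤ N * C) := by
  have hpos : 0 < ‖vdm α z‖ := norm_pos_iff.mpr hvdm
  have hA : ∀ i₀, ∀ x ∈ A, ‖vdm α (Function.update z i₀ x)‖ ≤ ‖vdm α z‖ :=
    fun i₀ _ hx => norm_vdm_update_le_of_isFekete α hmax hzA i₀ hx
  have hK : ∀ i₀, ∀ x ∈ K, ‖vdm α (Function.update z i₀ x) / vdm α z‖ ≤ C := by
    intro i₀ x hx
    have hsup : sSup ((fun a => ‖eval a (lagrangeNumerator α z i₀)‖) '' (A : Set _)) ≤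
        ‖vdm α z‖ := by
      refine Real.sSup_le ?_ (norm_nonneg _)
      rintro _ ⟨a, ha, rfl⟩
      simpa only [eval_lagrangeNumerator] using hA i₀ a ha
    rw [norm_div, div_le_iff₀ hpos, ← eval_lagrangeNumerator]
    exact (hWAM _ (totalDegree_lagrangeNumerator_le α hαdeg z i₀) x hx).trans
      (mul_le_mul_of_nonneg_left hsup hC.le)
  refine ⟨fun i₀ x hx => ?_, hK, fun x hx => ?_⟩
  · rw [norm_div, div_le_one hpos]
    exact hA i₀ x hx
  · calc ∑ i₀ : Fin N, ‖vdm α (Function.update z i₀ x) / vdm α z‖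
        ≤ ∑ _i₀ : Fin N, C := Finset.sum_le_sum fun i₀ _ => hK i₀ x hx
      _ = N * C := by simp

/-- Let `K ⊂ ℂ^d`, `A ⊂ K` finite with `‖p‖_K ≤ C ‖p‖_A` for every
polynomial of total degree at most `n` (`C > 0`). Let `N = C(n+d,d)` and let `Z ⊂ A` be a
set of `N` Fekete points of `A` (maximizing `|vdm|` over `N`-point subsets of `A`, with
`vdm(Z) ≠ 0`). Then the fundamental Lagrange polynomials
`ℓ_{i₀}(x) = vdm(Z \ {z i₀} ∪ {x}) / vdm(Z)` satisfy `‖ℓ_{i₀}‖_A ≤ 1` and `‖ℓ_{i₀}‖_K ≤ C`,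
and the Lebesgue constant satisfies `sup_{x∈K} Σ_{i₀} |ℓ_{i₀}(x)| ≤ N·C`. -/
theorem stmt10 (d n N : ℕ) (hN : N = (n + d).choose d)
    (α : Fin N → (Fin d →₀ ℕ)) (hαinj : Function.Injective α)
    (hαdeg : ∀ j, ((α j).sum fun _ e => e) ≤ n)
    (hαall : ∀ β : Fin d →₀ ℕ, (β.sum fun _ e => e) ≤ n → ∃ j, α j = β)
    (K : Set (Fin d → ℂ)) (A : Finset (Fin d → ℂ)) (hAK : (A : Set (Fin d → ℂ)) ⊆ K)
    (C : ℝ) (hC : 0 < C)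
    (hWAM : ∀ p : MvPolynomial (Fin d) ℂ, p.totalDegree ≤ n →
      ∀ x ∈ K, ‖MvPolynomial.eval x p‖ ≤
        C * sSup ((fun a => ‖MvPolynomial.eval a p‖) '' (A : Set (Fin d → ℂ))))
    (z : Fin N → (Fin d → ℂ)) (hzinj : Function.Injective z) (hzA : ∀ i, z i ∈ A)
    (hmax : ∀ w : Fin N → (Fin d → ℂ), Function.Injective w → (∀ i, w i ∈ A) →
      ‖vdm α w‖ ≤ ‖vdm α z‖)
    (hvdm : vdm α z ≠ 0) :
    (∀ i₀ : Fin N, ∀ x ∈ (A : Set (Fin d → ℂ)),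
      ‖vdm α (Function.update z i₀ x) / vdm α z‖ ≤ 1) ∧
    (∀ i₀ : Fin N, ∀ x ∈ K,
      ‖vdm α (Function.update z i₀ x) / vdm α z‖ ≤ C) ∧
    (∀ x ∈ K,
      ∑ i₀ : Fin N, ‖vdm α (Function.update z i₀ x) / vdm α z‖ ≤ N * C) :=
  stmt10_general d n N α hαdeg K A C hC hWAM z hzA hmax hvdm
end

section
/- Let a < b be real numbers, let ν ≥ 0, and let g₁, g₂ be real univariate polynomials of degree at most ν with g₁(x) ≤ g₂(x) for all x ∈ [a,b]. Define t : ℝ² → ℝ² by t₁(y) = ((b−a)/2)y₁ + (b+a)/2 and t₂(y) = ((g₂(t₁(y)) − g₁(t₁(y)))/2)y₂ + (g₂(t₁(y)) + g₁(t₁(y)))/2. Then each component of t is a polynomial of total degree at most ν + 1 in (y₁, y₂), and t([−1,1]²) = K, where K = {(x₁, x₂) ∈ ℝ² : a ≤ x₁ ≤ b, g₁(x₁) ≤ x₂ ≤ g₂(x₁)}. -/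
/-!
The map `t` is fibred over its first coordinate: `t₁` maps `[-1, 1]` affinely onto `[a, b]`, and
for each `x₁ = t₁(y₁)` the map `y₂ ↦ t₂(y)` is the affine map of `[-1, 1]` onto the (possibly
degenerate) interval `[g₁(x₁), g₂(x₁)]`. Hence the image of the square is the union of the vertical
fibres of `K`, i.e. `K` itself. As a polynomial, `t₂ = p(t₁) y₂ + q(t₁)` with `deg p, deg q ≤ ν` and
`t₁` of degree one, so its total degree is at most `ν + 1`.
-/

open Set MvPolynomial

section

variable {R σ : Type*} [CommSemiring R]

theorem totalDegree_aeval_le (p : Polynomial R) (L : MvPolynomial σ R) :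
    (Polynomial.aeval L p).totalDegree ≤ p.natDegree * L.totalDegree := by
  rw [Polynomial.aeval_eq_sum_range]
  refine (totalDegree_finsetSum _ _).trans (Finset.sup_le fun i hi => ?_)
  calc (p.coeff i • L ^ i).totalDegree
      ≤ (L ^ i).totalDegree := totalDegree_smul_le _ _
    _ ≤ i * L.totalDegree := totalDegree_pow _ _
    _ ≤ p.natDegree * L.totalDegree :=
        Nat.mul_le_mul_right _ (Nat.lt_succ_iff.mp (Finset.mem_range.mp hi))

theorem totalDegree_X_le (i : σ) : (X i : MvPolynomial σ R).totalDegree ≤ 1 :=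
  (totalDegree_monomial_le _ _).trans (by simp)

theorem totalDegree_aeval_mul_X_add_aeval_le {p q : Polynomial R} {L : MvPolynomial σ R}
    {ν : ℕ} (hL : L.totalDegree ≤ 1) (hp : p.natDegree ≤ ν) (hq : q.natDegree ≤ ν) (i : σ) :
    (Polynomial.aeval L p * X i + Polynomial.aeval L q).totalDegree ≤ ν + 1 := by
  have hdeg (r : Polynomial R) (hr : r.natDegree ≤ ν) : (Polynomial.aeval L r).totalDegree ≤ ν :=
    (totalDegree_aeval_le r L).trans (by nlinarith)
  refine (totalDegree_add _ _).trans (max_le ?_ ((hdeg q hq).trans ν.le_succ))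
  exact (totalDegree_mul _ _).trans (add_le_add (hdeg p hp) (totalDegree_X_le i))

theorem eval_aeval (p : Polynomial R) (L : MvPolynomial σ R) (y : σ → R) :
    eval y (Polynomial.aeval L p) = p.eval (eval y L) :=
  (Polynomial.aeval_algHom_apply (aeval y) L p).symm

end

noncomputable def intervalAffine (lo hi s : ℝ) : ℝ := (hi - lo) / 2 * s + (hi + lo) / 2

theorem intervalAffine_image_Icc {lo hi : ℝ} (h : lo ≤ hi) :
    intervalAffine lo hi '' Icc (-1) 1 = Icc lo hi := by
  have : intervalAffine lo hi = (· + (hi + lo) / 2) ∘ ((hi - lo) / 2 * ·) := rfl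
  rw [this, image_comp, image_mul_left_Icc (by linarith) (by norm_num), image_add_const_Icc]
  congr 1 <;> ring

noncomputable def intervalAffineMvPoly {σ : Type*} (lo hi : ℝ) (i : σ) : MvPolynomial σ ℝ :=
  C ((hi - lo) / 2) * X i + C ((hi + lo) / 2)

theorem eval_intervalAffineMvPoly {σ : Type*} (lo hi : ℝ) (i : σ) (y : σ → ℝ) :
    eval y (intervalAffineMvPoly lo hi i) = intervalAffine lo hi (y i) := by
  simp [intervalAffineMvPoly, intervalAffine]

theorem totalDegree_intervalAffineMvPoly_le {σ : Type*} (lo hi : ℝ) (i : σ) :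
    (intervalAffineMvPoly lo hi i).totalDegree ≤ 1 := by
  refine (totalDegree_add _ _).trans (max_le ?_ (by rw [totalDegree_C]; omega))
  exact (totalDegree_mul _ _).trans (by rw [totalDegree_C, zero_add]; exact totalDegree_X_le i)

theorem image_fibered_square (f : ℝ → ℝ) (h : ℝ → ℝ → ℝ) (S T : Set ℝ) :
    (fun y : Fin 2 → ℝ => ![f (y 0), h (f (y 0)) (y 1)]) '' {y | y 0 ∈ S ∧ y 1 ∈ T} =
      {x | x 0 ∈ f '' S ∧ x 1 ∈ h (x 0) '' T} := by
  ext x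
  constructor
  · rintro ⟨y, ⟨hy0, hy1⟩, rfl⟩
    exact ⟨mem_image_of_mem f hy0, mem_image_of_mem _ hy1⟩
  · rintro ⟨⟨s, hs, hs0⟩, ⟨t, ht, ht1⟩⟩
    refine ⟨![s, t], ⟨hs, ht⟩, ?_⟩
    ext i
    fin_cases i
    · exact hs0
    · simp [hs0, ht1]

/-- Let `a < b`, `ν ≥ 0`, and let `g₁, g₂` be real univariate polynomials of
degree at most `ν` with `g₁ ≤ g₂` on `[a,b]`. Define `t : ℝ² → ℝ²` by
`t₁(y) = ((b−a)/2)y₁ + (b+a)/2` and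
`t₂(y) = ((g₂(t₁(y)) − g₁(t₁(y)))/2)y₂ + (g₂(t₁(y)) + g₁(t₁(y)))/2`.
Then each component of `t` is a polynomial of total degree at most `ν + 1`, and
`t([−1,1]²) = K := {(x₁,x₂) : a ≤ x₁ ≤ b, g₁(x₁) ≤ x₂ ≤ g₂(x₁)}`. -/
theorem stmt17 (a b : ℝ) (hab : a < b) (ν : ℕ) (g₁ g₂ : Polynomial ℝ)
    (hg₁ : g₁.natDegree ≤ ν) (hg₂ : g₂.natDegree ≤ ν)
    (hle : ∀ x ∈ Set.Icc a b, g₁.eval x ≤ g₂.eval x) :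
    (∃ P : Fin 2 → MvPolynomial (Fin 2) ℝ,
      (∀ i, (P i).totalDegree ≤ ν + 1) ∧
      ∀ y : Fin 2 → ℝ,
        MvPolynomial.eval y (P 0) = (b - a) / 2 * y 0 + (b + a) / 2 ∧
        MvPolynomial.eval y (P 1) =
          (g₂.eval ((b - a) / 2 * y 0 + (b + a) / 2) -
              g₁.eval ((b - a) / 2 * y 0 + (b + a) / 2)) / 2 * y 1 +
            (g₂.eval ((b - a) / 2 * y 0 + (b + a) / 2) +
              g₁.eval ((b - a) / 2 * y 0 + (b + a) / 2)) / 2) ∧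
    (fun y : Fin 2 → ℝ =>
        ![(b - a) / 2 * y 0 + (b + a) / 2,
          (g₂.eval ((b - a) / 2 * y 0 + (b + a) / 2) -
              g₁.eval ((b - a) / 2 * y 0 + (b + a) / 2)) / 2 * y 1 +
            (g₂.eval ((b - a) / 2 * y 0 + (b + a) / 2) +
              g₁.eval ((b - a) / 2 * y 0 + (b + a) / 2)) / 2]) ''
      {y : Fin 2 → ℝ | y 0 ∈ Set.Icc (-1 : ℝ) 1 ∧ y 1 ∈ Set.Icc (-1 : ℝ) 1} =
      {x : Fin 2 → ℝ | x 0 ∈ Set.Icc a b ∧ x 1 ∈ Set.Icc (g₁.eval (x 0)) (g₂.eval (x 0))} := by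
  set L : MvPolynomial (Fin 2) ℝ := intervalAffineMvPoly a b 0
  have hL : L.totalDegree ≤ 1 := totalDegree_intervalAffineMvPoly_le a b 0
  have half_le (p : Polynomial ℝ) (hp : p.natDegree ≤ ν) :
      (Polynomial.C (1 / 2) * p).natDegree ≤ ν :=
    (Polynomial.natDegree_C_mul_le _ _).trans hp
  refine ⟨⟨![L, Polynomial.aeval L (Polynomial.C (1 / 2) * (g₂ - g₁)) * X 1 +
      Polynomial.aeval L (Polynomial.C (1 / 2) * (g₂ + g₁))], ?_, fun y => ⟨?_, ?_⟩⟩, ?_⟩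
  · intro i
    fin_cases i
    · exact hL.trans (by omega)
    · exact totalDegree_aeval_mul_X_add_aeval_le hL
        (half_le _ ((Polynomial.natDegree_sub_le _ _).trans (max_le hg₂ hg₁)))
        (half_le _ ((Polynomial.natDegree_add_le _ _).trans (max_le hg₂ hg₁))) 1
  · exact eval_intervalAffineMvPoly a b 0 y
  · simp only [Matrix.cons_val_one, Matrix.cons_val_zero, map_add, map_mul, eval_X, eval_aeval,
      L, eval_intervalAffineMvPoly, intervalAffine, Polynomial.eval_C,
      Polynomial.eval_sub]
    ring
  · refine (image_fibered_square (intervalAffine a b)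
      (fun x => intervalAffine (g₁.eval x) (g₂.eval x)) _ _).trans ?_
    ext x
    simp only [mem_ofPred_eq, intervalAffine_image_Icc hab.le]
    exact and_congr_right fun hx => by rw [intervalAffine_image_Icc (hle _ hx)]
end

section
/- Let K ⊂ ℝ^d be compact, let A ⊂ K be a finite set with M = card(A), and let C > 0 be a constant such that ‖p‖_K ≤ C ‖p‖_A for every polynomial p of total degree at most n in d variables. Let f : K → ℝ be continuous, and let L_n f be a polynomial of total degree at most n minimizing Σ_{a∈A} (f(a) − p(a))² over all polynomials p of total degree at most n. Then ‖f − L_n f‖_K ≤ (1 + C(1 + √M)) · min{ ‖f − p‖_K : p of total degree ≤ n }. -/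
open MvPolynomial Set

/-! If `L` is the discrete least-squares fit and `p` any competitor with uniform error `E` on `K`,
then on `A` each residual of `L` is at most the ℓ²-norm of the residuals of `L`, hence of `p`,
hence at most `√M E`. So `‖p - L‖_A ≤ (1 + √M) E`, the mesh inequality lifts this to
`‖p - L‖_K ≤ C (1 + √M) E`, and the triangle inequality through `p` gives the bound. -/

theorem abs_le_sqrt_card_mul_of_sum_sq_le {ι : Type*} {s : Finset ι} {g h : ι → ℝ} {E : ℝ}
    (hgh : ∑ j ∈ s, g j ^ 2 ≤ ∑ j ∈ s, h j ^ 2) (hh : ∀ j ∈ s, |h j| ≤ E)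
    {i : ι} (hi : i ∈ s) : |g i| ≤ √s.card * E := by
  have hE : 0 ≤ E := (abs_nonneg _).trans (hh i hi)
  have hsum : ∑ j ∈ s, h j ^ 2 ≤ s.card * E ^ 2 := by
    simpa using Finset.sum_le_sum fun j hj => pow_le_pow_left₀ (abs_nonneg _) (hh j hj) 2
  calc |g i| ≤ √(s.card * E ^ 2) :=
        Real.abs_le_sqrt <| ((Finset.single_le_sum (fun j _ => sq_nonneg (g j)) hi).trans
          hgh).trans hsum
    _ = √s.card * E := by rw [Real.sqrt_mul' _ (sq_nonneg E), Real.sqrt_sq hE]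

theorem abs_sub_le_of_sum_sq_le_of_norming {α : Type*} {K : Set α} {A : Finset α}
    (hAK : (A : Set α) ⊆ K) {C E : ℝ} (hC : 0 ≤ C) {f q ℓ : α → ℝ}
    (hq : ∀ y ∈ K, |f y - q y| ≤ E)
    (hnorming : ∀ x ∈ K, |q x - ℓ x| ≤ C * sSup ((fun a => |q a - ℓ a|) '' (A : Set α)))
    (hℓ : ∑ a ∈ A, (f a - ℓ a) ^ 2 ≤ ∑ a ∈ A, (f a - q a) ^ 2) {x : α} (hx : x ∈ K) :
    |f x - ℓ x| ≤ (1 + C * (1 + √A.card)) * E := by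
  have hE : 0 ≤ E := (abs_nonneg _).trans (hq x hx)
  have hA : sSup ((fun a => |q a - ℓ a|) '' (A : Set α)) ≤ (1 + √A.card) * E := by
    refine Real.sSup_le ?_ (by positivity)
    rintro _ ⟨a, ha, rfl⟩
    calc |q a - ℓ a| = |(f a - ℓ a) - (f a - q a)| := by ring_nf
      _ ≤ |f a - ℓ a| + |f a - q a| := abs_sub _ _
      _ ≤ √A.card * E + E :=
          add_le_add (abs_le_sqrt_card_mul_of_sum_sq_le hℓ (fun b hb => hq b (hAK hb)) ha)
            (hq a (hAK ha))
      _ = (1 + √A.card) * E := by ring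
  calc |f x - ℓ x| = |(f x - q x) + (q x - ℓ x)| := by ring_nf
    _ ≤ |f x - q x| + |q x - ℓ x| := abs_add_le _ _
    _ ≤ E + C * ((1 + √A.card) * E) :=
        add_le_add (hq x hx) ((hnorming x hx).trans (mul_le_mul_of_nonneg_left hA hC))
    _ = (1 + C * (1 + √A.card)) * E := by ring

theorem IsCompact.abs_le_sSup_image {α : Type*} [TopologicalSpace α] {K : Set α}
    (hK : IsCompact K) {g : α → ℝ} (hg : ContinuousOn g K) {y : α} (hy : y ∈ K) :
    |g y| ≤ sSup ((fun z => |g z|) '' K) :=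
  le_csSup (hK.image_of_continuousOn hg.abs).bddAbove ⟨y, hy, rfl⟩

/-- Let `K ⊂ ℝ^d` be compact, `A ⊂ K` finite with `M = card(A)`, and
`C > 0` with `‖p‖_K ≤ C ‖p‖_A` for every polynomial `p` of total degree at most `n`. Let
`f : K → ℝ` be continuous and let `L` be a discrete least-squares approximant of degree `n`
to `f` on `A`. Then `‖f − L‖_K ≤ (1 + C(1 + √M)) ‖f − p‖_K` for every polynomial `p` of
total degree at most `n` (i.e. the bound holds with the min over all such `p`). -/
theorem stmt19 (d n : ℕ) (K : Set (Fin d → ℝ)) (hK : IsCompact K)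
    (A : Finset (Fin d → ℝ)) (hAK : (A : Set (Fin d → ℝ)) ⊆ K)
    (M : ℕ) (hM : M = A.card) (C : ℝ) (hC : 0 < C)
    (hWAM : ∀ p : MvPolynomial (Fin d) ℝ, p.totalDegree ≤ n →
      ∀ x ∈ K, |MvPolynomial.eval x p| ≤
        C * sSup ((fun a => |MvPolynomial.eval a p|) '' (A : Set (Fin d → ℝ))))
    (f : (Fin d → ℝ) → ℝ) (hf : ContinuousOn f K)
    (L : MvPolynomial (Fin d) ℝ) (hL : L.totalDegree ≤ n)
    (hLS : ∀ p : MvPolynomial (Fin d) ℝ, p.totalDegree ≤ n →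
      ∑ a ∈ A, (f a - MvPolynomial.eval a L) ^ 2 ≤
        ∑ a ∈ A, (f a - MvPolynomial.eval a p) ^ 2) :
    ∀ p : MvPolynomial (Fin d) ℝ, p.totalDegree ≤ n →
      ∀ x ∈ K, |f x - MvPolynomial.eval x L| ≤
        (1 + C * (1 + Real.sqrt M)) * sSup ((fun y => |f y - MvPolynomial.eval y p|) '' K) := by
  intro p hp x hx
  have hdeg : (p - L).totalDegree ≤ n := (totalDegree_sub p L).trans (max_le hp hL)
  subst hM
  exact abs_sub_le_of_sum_sq_le_of_norming hAK hC.le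
    (fun y hy => hK.abs_le_sSup_image (hf.sub (continuous_eval p).continuousOn) hy)
    (by simpa only [map_sub] using hWAM (p - L) hdeg) (hLS p hp) hx
end
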